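/- arXiv:1707.09225 — 10 statements merged into one kernel-verified Lean document; each statement's English description precedes it below -/
import Mathlib

section
/- The minisum approval voting problem has optimal value Σ_{j} min(γ_j, n − γ_j); that is, min over committees x : Fin m → Bool of Σ_{i ∈ Fin n} d_i(x) = Σ_{j} min(γ_j, n − γ_j), and the committee x* defined by x* j = true if and only if γ_j ≥ n − γ_j attains this minimum. -/
/-!
Counting the disagreeing (voter, candidate) pairs by candidate instead of by voter, the total
distance of a committee `x` is `∑ j, (γ_j if x j = false, n - γ_j if x j = true)`. The summands
are independent, so each is minimised separately, by electing `j` exactly when `n - γ_j ≤ γ_j`.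
-/

/-- Hamming distance of voter `i`'s profile to the committee `x`. -/
def dHam {n m : ℕ} (p : Fin n → Fin m → Bool) (x : Fin m → Bool) (i : Fin n) : ℕ :=
  (Finset.univ.filter fun j => p i j ≠ x j).card

/-- Total number of approvals of candidate `j`. -/
def gamma {n m : ℕ} (p : Fin n → Fin m → Bool) (j : Fin m) : ℕ :=
  (Finset.univ.filter fun i => p i j = true).card

open Finset

theorem cond_decide_le_eq_min {α : Type*} [LinearOrder α] (a b : α) :
    cond (decide (b ≤ a)) b a = min a b := by
  rw [min_def', Bool.cond_decide]

theorem min_le_cond {α : Type*} [LinearOrder α] (a b : α) (c : Bool) :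
    min a b ≤ cond c b a := by
  cases c
  · exact min_le_left a b
  · exact min_le_right a b

theorem card_filter_ne_eq_cond_gamma {n m : ℕ} (p : Fin n → Fin m → Bool) (j : Fin m)
    (b : Bool) : #{i | p i j ≠ b} = cond b (n - gamma p j) (gamma p j) := by
  cases b
  · simp [gamma]
  · have split := card_filter_add_card_filter_not (s := univ) (fun i => p i j = true)
    simp only [Bool.not_eq_true, card_univ, Fintype.card_fin] at split
    simp only [ne_eq, Bool.not_eq_true, cond_true, gamma]
    omega

theorem sum_dHam_eq_sum_cond_gamma {n m : ℕ} (p : Fin n → Fin m → Bool) (x : Fin m → Bool) :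
    ∑ i, dHam p x i = ∑ j, cond (x j) (n - gamma p j) (gamma p j) := by
  simp only [dHam, card_filter, ← card_filter_ne_eq_cond_gamma]
  exact sum_comm

/-- The minisum approval voting problem has optimal value
`Σ_j min(γ_j, n − γ_j)`, and the committee electing `j` iff `γ_j ≥ n − γ_j`
attains this minimum. -/
theorem minisum_optimal_value {n m : ℕ} (p : Fin n → Fin m → Bool) :
    IsLeast {v : ℕ | ∃ x : Fin m → Bool, ∑ i : Fin n, dHam p x i = v}
      (∑ j : Fin m, min (gamma p j) (n - gamma p j)) ∧
    (∑ i : Fin n, dHam p (fun j => decide (n - gamma p j ≤ gamma p j)) i) =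
      ∑ j : Fin m, min (gamma p j) (n - gamma p j) := by
  have attained : ∑ i, dHam p (fun j => decide (n - gamma p j ≤ gamma p j)) i =
      ∑ j, min (gamma p j) (n - gamma p j) := by
    simp only [sum_dHam_eq_sum_cond_gamma, cond_decide_le_eq_min]
  refine ⟨⟨⟨_, attained⟩, ?_⟩, attained⟩
  rintro v ⟨x, rfl⟩
  rw [sum_dHam_eq_sum_cond_gamma]
  exact sum_le_sum fun j _ => min_le_cond _ _ (x j)
end

section
/- Fix a committee size C ≤ m. Let x* : Fin m → Bool be a committee with card {j | x* j = true} = C such that every elected candidate has at least as many approvals as every non-elected one, i.e., for all j, j' with x* j = true and x* j' = false one has γ_j ≥ γ_{j'}. Then x* minimizes the sum of Hamming distances among all committees of size C: for every x : Fin m → Bool with card {j | x j = true} = C, Σ_{i ∈ Fin n} d_i(x*) ≤ Σ_{i ∈ Fin n} d_i(x). -/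
open Finset

theorem Finset.sum_le_sum_of_card_eq_of_forall_notMem_le {α β : Type*} [DecidableEq α]
    [AddCommMonoid β] [LinearOrder β] [IsOrderedAddMonoid β] {f : α → β} {S T : Finset α}
    (hST : #S = #T) (hf : ∀ j ∈ T, ∀ j' ∉ T, f j' ≤ f j) :
    ∑ j ∈ S, f j ≤ ∑ j ∈ T, f j := by
  have hcard : #(S \ T) = #(T \ S) := by
    have := card_sdiff_add_card_inter S T
    have := card_sdiff_add_card_inter T S
    rw [inter_comm] at this
    omega
  have hdiff : ∑ j ∈ S \ T, f j ≤ ∑ j ∈ T \ S, f j := by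
    rcases (T \ S).eq_empty_or_nonempty with hempty | hne
    · rw [hempty, card_empty, card_eq_zero] at hcard
      rw [hcard, hempty]
    · obtain ⟨k, hk, hmin⟩ := exists_min_image (T \ S) f hne
      calc ∑ j ∈ S \ T, f j
          ≤ #(S \ T) • f k := sum_le_card_nsmul _ _ _ fun j hj =>
            hf k (mem_sdiff.mp hk).1 j (mem_sdiff.mp hj).2
        _ = #(T \ S) • f k := by rw [hcard]
        _ ≤ ∑ j ∈ T \ S, f j := card_nsmul_le_sum _ _ _ hmin
  rw [← sum_inter_add_sum_sdiff S T, ← sum_inter_add_sum_sdiff T S, inter_comm]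
  exact add_le_add_right hdiff _

theorem sum_dHam_eq_sum_card_disagree {n m : ℕ} (p : Fin n → Fin m → Bool) (x : Fin m → Bool) :
    ∑ i, dHam p x i = ∑ j, #{i | p i j ≠ x j} := by
  simp only [dHam, card_filter]
  exact sum_comm

theorem card_disagree_add_two_mul_ite_gamma {n m : ℕ} (p : Fin n → Fin m → Bool)
    (j : Fin m) (b : Bool) :
    #{i | p i j ≠ b} + 2 * (if b then gamma p j else 0) = (if b then n else 0) + gamma p j := by
  cases b with
  | false => simp [gamma]
  | true =>
    have hsplit := card_filter_add_card_filter_not (s := (univ : Finset (Fin n)))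
      (fun i => p i j = true)
    simp only [card_univ, Fintype.card_fin] at hsplit
    simp only [gamma, if_true, ne_eq]
    omega

theorem sum_dHam_add_two_mul_sum_gamma {n m : ℕ} (p : Fin n → Fin m → Bool) (x : Fin m → Bool) :
    ∑ i, dHam p x i + 2 * ∑ j with x j = true, gamma p j
      = #{j | x j = true} * n + ∑ j, gamma p j := by
  calc ∑ i, dHam p x i + 2 * ∑ j with x j = true, gamma p j
      = ∑ j, (#{i | p i j ≠ x j} + 2 * if x j then gamma p j else 0) := by
        rw [sum_dHam_eq_sum_card_disagree, sum_filter, mul_sum, sum_add_distrib]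
    _ = ∑ j, ((if x j then n else 0) + gamma p j) :=
        sum_congr rfl fun j _ => card_disagree_add_two_mul_ite_gamma p j (x j)
    _ = #{j | x j = true} * n + ∑ j, gamma p j := by
        rw [sum_add_distrib, ← sum_filter, sum_const, smul_eq_mul]

theorem cardinality_constrained_minisum_general {n m C : ℕ}
    (p : Fin n → Fin m → Bool) (xstar : Fin m → Bool)
    (hcard : (Finset.univ.filter fun j => xstar j = true).card = C)
    (hmaj : ∀ j j' : Fin m, xstar j = true → xstar j' = false →
      gamma p j' ≤ gamma p j) :
    ∀ x : Fin m → Bool, (Finset.univ.filter fun j => x j = true).card = C →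
      ∑ i : Fin n, dHam p xstar i ≤ ∑ i : Fin n, dHam p x i := by
  intro x hx
  have hstar := sum_dHam_add_two_mul_sum_gamma p xstar
  have hx' := sum_dHam_add_two_mul_sum_gamma p x
  have hgamma : ∑ j with x j = true, gamma p j ≤ ∑ j with xstar j = true, gamma p j :=
    sum_le_sum_of_card_eq_of_forall_notMem_le (hx.trans hcard.symm) fun j hj j' hj' =>
      hmaj j j' (mem_filter.mp hj).2 (by simpa using hj')
  rw [hcard] at hstar
  rw [hx] at hx'
  omega

/-- With a fixed committee size `C ≤ m`, a committee `x*` of size `C`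
electing only candidates with the most approvals minimizes the sum of Hamming
distances among all committees of size `C`. -/
theorem cardinality_constrained_minisum {n m C : ℕ} (hC : C ≤ m)
    (p : Fin n → Fin m → Bool) (xstar : Fin m → Bool)
    (hcard : (Finset.univ.filter fun j => xstar j = true).card = C)
    (hmaj : ∀ j j' : Fin m, xstar j = true → xstar j' = false →
      gamma p j' ≤ gamma p j) :
    ∀ x : Fin m → Bool, (Finset.univ.filter fun j => x j = true).card = C →
      ∑ i : Fin n, dHam p xstar i ≤ ∑ i : Fin n, dHam p x i :=
  cardinality_constrained_minisum_general p xstar hcard hmaj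
end

section
/- Let d : Fin n → ℝ with d i ≥ 0 for all i, and let 1 ≤ k ≤ n. Then max over finsets S ⊆ Fin n with S.card = k of Σ_{i ∈ S} d i = min over t ≥ 0 of ( k·t + Σ_{i ∈ Fin n} max(d i − t, 0) ), and the minimum is attained (for instance at t equal to the k-th largest value of d). Equivalently, the sum of the k largest values of d equals min { k·t + Σ_i v i : t ≥ 0, v : Fin n → ℝ, v i ≥ 0, v i ≥ d i − t for all i }. -/
/-!
Weak duality: if `d i - t ≤ v i` and `v ≥ 0`, then for any `S` of size `k`,
`∑_{i ∈ S} d i ≤ ∑_{i ∈ S} (t + v i) ≤ k t + ∑_i v i`.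
For equality, take a maximizing `S`. By an exchange argument every value outside `S` is at most
every value inside, so `t = min_{i ∈ S} d i` separates `S` from its complement; then
`max (d i - t) 0` equals `d i - t` on `S` and `0` off `S`, and the bound is attained at this `t`.
-/

open Finset

variable {ι : Type*} {d v : ι → ℝ} {t : ℝ}

theorem le_of_mem_of_notMem_of_sum_maximal {S : Finset ι}
    (hmax : ∀ T : Finset ι, T.card = S.card → ∑ i ∈ T, d i ≤ ∑ i ∈ S, d i)
    {i j : ι} (hi : i ∈ S) (hj : j ∉ S) : d j ≤ d i := by
  classical
  have hj' : j ∉ S.erase i := fun h => hj (mem_of_mem_erase h)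
  have hcard : (insert j (S.erase i)).card = S.card := by
    rw [card_insert_of_notMem hj', card_erase_of_mem hi]
    have := card_pos.mpr ⟨i, hi⟩
    omega
  have hswap := hmax _ hcard
  rw [sum_insert hj', ← add_sum_erase S d hi] at hswap
  linarith

section

variable [Fintype ι]

theorem sum_le_card_mul_add_sum (S : Finset ι) (hv : ∀ i, 0 ≤ v i) (hdv : ∀ i, d i - t ≤ v i) :
    ∑ i ∈ S, d i ≤ S.card * t + ∑ i, v i :=
  calc ∑ i ∈ S, d i
      ≤ ∑ i ∈ S, (t + v i) := sum_le_sum fun i _ => by linarith [hdv i]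
    _ = S.card * t + ∑ i ∈ S, v i := by rw [sum_add_distrib, sum_const, nsmul_eq_mul]
    _ ≤ S.card * t + ∑ i, v i := by
        gcongr
        · exact fun i _ _ => hv i
        · exact subset_univ S

theorem sum_eq_card_mul_add_sum_max_sub {S : Finset ι} (hS : ∀ i ∈ S, t ≤ d i)
    (hSc : ∀ i ∉ S, d i ≤ t) :
    ∑ i ∈ S, d i = S.card * t + ∑ i, max (d i - t) 0 := by
  have hoff : ∑ i ∈ S, max (d i - t) 0 = ∑ i, max (d i - t) 0 :=
    sum_subset (subset_univ S) fun i _ hi => max_eq_right (by linarith [hSc i hi])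
  have hon : ∑ i ∈ S, max (d i - t) 0 = ∑ i ∈ S, (d i - t) :=
    sum_congr rfl fun i hi => max_eq_left (by linarith [hS i hi])
  rw [← hoff, hon, sum_sub_distrib, sum_const, nsmul_eq_mul]
  ring

end

theorem k_sum_dual_representation_general {n k : ℕ} (hk1 : 1 ≤ k)
    (d : Fin n → ℝ) (hd : ∀ i, 0 ≤ d i) (M : ℝ)
    (hM : IsGreatest {s : ℝ | ∃ S : Finset (Fin n), S.card = k ∧ ∑ i ∈ S, d i = s} M) :
    IsLeast {c : ℝ | ∃ t : ℝ, 0 ≤ t ∧ c = k * t + ∑ i : Fin n, max (d i - t) 0} M ∧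
    IsLeast {c : ℝ | ∃ (t : ℝ) (v : Fin n → ℝ), 0 ≤ t ∧ (∀ i, 0 ≤ v i) ∧
        (∀ i, d i - t ≤ v i) ∧ c = k * t + ∑ i : Fin n, v i} M := by
  obtain ⟨⟨S, rfl, rfl⟩, hmax⟩ := hM
  have hS : S.Nonempty := card_pos.mp hk1
  set t := S.inf' hS d
  have ht : 0 ≤ t := le_inf' hS d fun i _ => hd i
  have hSc : ∀ j ∉ S, d j ≤ t := fun j hj =>
    le_inf' hS d fun i hi => le_of_mem_of_notMem_of_sum_maximal
      (fun T hT => hmax ⟨T, hT, rfl⟩) hi hj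
  have hMt := sum_eq_card_mul_add_sum_max_sub (fun i hi => inf'_le d hi) hSc
  refine ⟨⟨⟨t, ht, hMt⟩, ?_⟩, ⟨⟨t, _, ht, fun i => le_max_right _ _, fun i => le_max_left _ _,
    hMt⟩, ?_⟩⟩
  · rintro c ⟨t', -, rfl⟩
    exact sum_le_card_mul_add_sum S (fun i => le_max_right _ _) fun i => le_max_left _ _
  · rintro c ⟨t', v, -, hv, hdv, rfl⟩
    exact sum_le_card_mul_add_sum S hv hdv

/-- For nonnegative `d` and `1 ≤ k ≤ n`, the sum of the `k` largest
values of `d` (the max of `Σ_{i ∈ S} d i` over finsets of cardinality `k`)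
equals `min_{t ≥ 0} (k·t + Σ_i max(d i − t, 0))`, the minimum being attained;
equivalently it equals
`min {k·t + Σ_i v i : t ≥ 0, v i ≥ 0, v i ≥ d i − t for all i}`. -/
theorem k_sum_dual_representation {n k : ℕ} (hk1 : 1 ≤ k) (hkn : k ≤ n)
    (d : Fin n → ℝ) (hd : ∀ i, 0 ≤ d i) (M : ℝ)
    (hM : IsGreatest {s : ℝ | ∃ S : Finset (Fin n), S.card = k ∧ ∑ i ∈ S, d i = s} M) :
    IsLeast {c : ℝ | ∃ t : ℝ, 0 ≤ t ∧ c = k * t + ∑ i : Fin n, max (d i - t) 0} M ∧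
    IsLeast {c : ℝ | ∃ (t : ℝ) (v : Fin n → ℝ), 0 ≤ t ∧ (∀ i, 0 ≤ v i) ∧
        (∀ i, d i - t ≤ v i) ∧ c = k * t + ∑ i : Fin n, v i} M :=
  k_sum_dual_representation_general hk1 d hd M hM
end

section
/- Let d : Fin n → ℝ with d i ≥ 0 for all i, and let 1 ≤ k ≤ n. Then max over finsets S ⊆ Fin n with S.card = k of Σ_{i ∈ S} d i = min { Σ_{i ∈ Fin n} u i + Σ_{h ∈ Fin k} v h : u : Fin n → ℝ, v : Fin k → ℝ, u i ≥ 0, v h ≥ 0, and u i + v h ≥ d i for all i ∈ Fin n and h ∈ Fin k }, and the minimum is attained. -/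
/-!
Weak duality: a bijection `σ` between a `k`-set `S` and the `k` dual variables gives
`∑_{i ∈ S} d i ≤ ∑_{i ∈ S} (u i + v (σ i)) ≤ ∑ u + ∑ v`. For a matching dual solution, take
`S` optimal and `t` the least value of `d` on `S`; by an exchange argument no index outside
`S` beats `t`, so `u i = (d i - t)⁺`, `v ≡ t` is feasible with value
`∑_{i ∈ S} (d i - t) + k t = ∑_{i ∈ S} d i`.
-/

open scoped Finset

section WeakDuality

variable {ι κ β : Type*} [Fintype ι] [Fintype κ]
  [AddCommMonoid β] [PartialOrder β] [IsOrderedAddMonoid β]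

theorem Finset.sum_le_sum_add_sum_of_card_eq {S : Finset ι} (hS : #S = Fintype.card κ)
    {d u : ι → β} {v : κ → β} (hu : ∀ i, 0 ≤ u i) (huv : ∀ i h, d i ≤ u i + v h) :
    ∑ i ∈ S, d i ≤ ∑ i, u i + ∑ h, v h := by
  let σ : S ≃ κ := Fintype.equivOfCardEq (by simpa using hS)
  calc ∑ i ∈ S, d i
      ≤ ∑ i : S, (u i + v (σ i)) := by
        rw [← Finset.sum_coe_sort]
        exact Finset.sum_le_sum fun i _ => huv i (σ i)
    _ = ∑ i ∈ S, u i + ∑ h, v h := by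
        rw [Finset.sum_add_distrib, Finset.sum_coe_sort, σ.sum_comp v]
    _ ≤ ∑ i, u i + ∑ h, v h := add_le_add_left (Finset.sum_le_univ_sum_of_nonneg hu) _

end WeakDuality

section Threshold

variable {ι β : Type*} [AddCommGroup β] [LinearOrder β] [IsOrderedAddMonoid β]

theorem Finset.apply_le_of_forall_card_eq_sum_le {d : ι → β} {S : Finset ι}
    (hmax : ∀ T : Finset ι, #T = #S → ∑ i ∈ T, d i ≤ ∑ i ∈ S, d i)
    {i j : ι} (hi : i ∈ S) (hj : j ∉ S) : d j ≤ d i := by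
  classical
  have hj' : j ∉ S.erase i := fun h => hj (Finset.mem_of_mem_erase h)
  have hswap := hmax (insert j (S.erase i))
    (by rw [Finset.card_insert_of_notMem hj', Finset.card_erase_add_one hi])
  rw [Finset.sum_insert hj', ← Finset.sum_erase_add S d hi, add_comm] at hswap
  exact le_of_add_le_add_left hswap

theorem Finset.sum_posPart_sub_add_card_nsmul [Fintype ι] {d : ι → β} {S : Finset ι} {t : β}
    (hin : ∀ i ∈ S, t ≤ d i) (hout : ∀ i ∉ S, d i ≤ t) :
    ∑ i, (d i - t)⁺ + #S • t = ∑ i ∈ S, d i := by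
  have hsupp : ∑ i, (d i - t)⁺ = ∑ i ∈ S, (d i - t) := by
    rw [← Finset.sum_subset (Finset.subset_univ S)
      fun i _ hi => posPart_eq_zero.2 (sub_nonpos.2 (hout i hi))]
    exact Finset.sum_congr rfl fun i hi => posPart_eq_self.2 (sub_nonneg.2 (hin i hi))
  rw [hsupp, Finset.sum_sub_distrib, Finset.sum_const, sub_add_cancel]

end Threshold

theorem k_sum_assignment_dual_general {n k : ℕ} (hk1 : 1 ≤ k)
    (d : Fin n → ℝ) (hd : ∀ i, 0 ≤ d i) (M : ℝ)
    (hM : IsGreatest {s : ℝ | ∃ S : Finset (Fin n), S.card = k ∧ ∑ i ∈ S, d i = s} M) :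
    IsLeast {c : ℝ | ∃ (u : Fin n → ℝ) (v : Fin k → ℝ), (∀ i, 0 ≤ u i) ∧
        (∀ h, 0 ≤ v h) ∧ (∀ (i : Fin n) (h : Fin k), d i ≤ u i + v h) ∧
        c = ∑ i : Fin n, u i + ∑ h : Fin k, v h} M := by
  obtain ⟨⟨S, hScard, rfl⟩, hub⟩ := hM
  obtain ⟨i₀, hi₀, hmin⟩ := S.exists_min_image d (Finset.card_pos.mp (by omega))
  have hout : ∀ j ∉ S, d j ≤ d i₀ := fun j hj =>
    Finset.apply_le_of_forall_card_eq_sum_le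
      (fun T hT => hub ⟨T, hT.trans hScard, rfl⟩) hi₀ hj
  constructor
  · refine ⟨fun i => (d i - d i₀)⁺, fun _ => d i₀, fun i => posPart_nonneg _,
      fun _ => hd i₀, fun i _ => sub_le_iff_le_add.1 (le_posPart _), ?_⟩
    rw [Finset.sum_const, Finset.card_univ, Fintype.card_fin, ← hScard,
      Finset.sum_posPart_sub_add_card_nsmul hmin hout]
  · rintro c ⟨u, v, hu, -, huv, rfl⟩
    exact Finset.sum_le_sum_add_sum_of_card_eq (by simpa using hScard) hu huv

/-- For nonnegative `d` and `1 ≤ k ≤ n`, the sum of the `k` largest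
values of `d` (the max of `Σ_{i ∈ S} d i` over finsets of cardinality `k`)
equals `min {Σ_i u i + Σ_{h ∈ Fin k} v h : u, v ≥ 0, u i + v h ≥ d i ∀ i, h}`,
the minimum being attained. -/
theorem k_sum_assignment_dual {n k : ℕ} (hk1 : 1 ≤ k) (hkn : k ≤ n)
    (d : Fin n → ℝ) (hd : ∀ i, 0 ≤ d i) (M : ℝ)
    (hM : IsGreatest {s : ℝ | ∃ S : Finset (Fin n), S.card = k ∧ ∑ i ∈ S, d i = s} M) :
    IsLeast {c : ℝ | ∃ (u : Fin n → ℝ) (v : Fin k → ℝ), (∀ i, 0 ≤ u i) ∧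
        (∀ h, 0 ≤ v h) ∧ (∀ (i : Fin n) (h : Fin k), d i ≤ u i + v h) ∧
        c = ∑ i : Fin n, u i + ∑ h : Fin k, v h} M :=
  k_sum_assignment_dual_general hk1 d hd M hM
end

section
/- Fix 1 ≤ k ≤ n. The mixed-integer program: minimize v over x : Fin m → Bool, z : Fin n → Fin m → ℝ, and v ∈ ℝ subject to z i j ≥ (p i j)·(1 − x j) and z i j ≥ (1 − p i j)·(x j) for all i, j (booleans identified with 0/1 reals), and Σ_{j} Σ_{i ∈ S} z i j ≤ v for every finset S ⊆ Fin n with S.card = k, has optimal value equal to z(k): its infimum over feasible points equals z(k) and is attained. -/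
/-- `D_k(x)`: sum of the `k` largest Hamming distances of the voters to `x`,
i.e. the maximum of `d_S(x)` over finsets `S ⊆ Fin n` with `S.card = k`. -/
def Dk {n m : ℕ} (p : Fin n → Fin m → Bool) (k : ℕ) (x : Fin m → Bool) : ℕ :=
  (Finset.powersetCard k (Finset.univ : Finset (Fin n))).sup
    (fun S => ∑ i ∈ S, dHam p x i)

/-- `z(k)`: the optimal value of the `k`-sum approval voting problem. -/
def zk {n m : ℕ} (p : Fin n → Fin m → Bool) (k : ℕ) : ℕ :=
  (Finset.univ : Finset (Fin m → Bool)).inf' Finset.univ_nonempty (Dk p k)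

/-- Boolean identified with a 0/1 real. -/
def bR (b : Bool) : ℝ := if b then 1 else 0

/-!
The two lower bounds on `z i j` together say exactly `z i j ≥ [p i j ≠ x j]`, and the
mismatch indicators of voter `i` sum to `d_i(x)`. So for fixed `x` the least feasible `v`
is `D_k(x)`, attained by taking `z` to be the indicators themselves; minimising over `x`
gives `z(k)`.
-/

open Finset

lemma bR_xor_le_iff (a b : Bool) (z : ℝ) :
    bR (xor a b) ≤ z ↔ bR a * (1 - bR b) ≤ z ∧ (1 - bR a) * bR b ≤ z := by
  cases a <;> cases b <;> norm_num [bR] <;> exact fun h => zero_le_one.trans h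

section Voting

variable {n m : ℕ} (p : Fin n → Fin m → Bool)

lemma sum_bR_xor_eq_dHam (x : Fin m → Bool) (i : Fin n) :
    ∑ j, bR (xor (p i j) (x j)) = dHam p x i := by
  rw [dHam, card_filter, Nat.cast_sum]
  refine sum_congr rfl fun j _ => ?_
  cases p i j <;> cases x j <;> simp [bR]

lemma sum_sum_bR_xor_eq_sum_dHam (x : Fin m → Bool) (S : Finset (Fin n)) :
    ∑ j, ∑ i ∈ S, bR (xor (p i j) (x j)) = ∑ i ∈ S, (dHam p x i : ℝ) := by
  rw [sum_comm]
  exact sum_congr rfl fun i _ => sum_bR_xor_eq_dHam p x i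

lemma sum_dHam_le_Dk {k : ℕ} (x : Fin m → Bool) {S : Finset (Fin n)} (hS : S.card = k) :
    ∑ i ∈ S, dHam p x i ≤ Dk p k x :=
  le_sup (f := fun S => ∑ i ∈ S, dHam p x i) (mem_powersetCard.mpr ⟨subset_univ S, hS⟩)

lemma exists_sum_dHam_eq_Dk {k : ℕ} (hkn : k ≤ n) (x : Fin m → Bool) :
    ∃ S : Finset (Fin n), S.card = k ∧ ∑ i ∈ S, dHam p x i = Dk p k x := by
  have hne : (powersetCard k (univ : Finset (Fin n))).Nonempty :=
    powersetCard_nonempty.mpr (by simpa using hkn)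
  obtain ⟨S, hS, hsum⟩ := exists_mem_eq_sup _ hne fun S => ∑ i ∈ S, dHam p x i
  exact ⟨S, (mem_powersetCard.mp hS).2, hsum.symm⟩

lemma zk_le_Dk (k : ℕ) (x : Fin m → Bool) : zk p k ≤ Dk p k x :=
  inf'_le _ (mem_univ x)

lemma exists_Dk_eq_zk (k : ℕ) : ∃ x : Fin m → Bool, Dk p k x = zk p k := by
  obtain ⟨x, -, hx⟩ := exists_mem_eq_inf' univ_nonempty (Dk p k)
  exact ⟨x, hx.symm⟩

end Voting

theorem mip_subset_disaggregated_value_general {n m k : ℕ} (hkn : k ≤ n)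
    (p : Fin n → Fin m → Bool) :
    IsLeast {v : ℝ | ∃ (x : Fin m → Bool) (z : Fin n → Fin m → ℝ),
        (∀ (i : Fin n) (j : Fin m), bR (p i j) * (1 - bR (x j)) ≤ z i j) ∧
        (∀ (i : Fin n) (j : Fin m), (1 - bR (p i j)) * bR (x j) ≤ z i j) ∧
        (∀ S : Finset (Fin n), S.card = k → ∑ j : Fin m, ∑ i ∈ S, z i j ≤ v)}
      ((zk p k : ℕ) : ℝ) := by
  constructor
  · obtain ⟨x, hx⟩ := exists_Dk_eq_zk p k
    refine ⟨x, fun i j => bR (xor (p i j) (x j)),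
      fun i j => ((bR_xor_le_iff _ _ _).mp le_rfl).1,
      fun i j => ((bR_xor_le_iff _ _ _).mp le_rfl).2, fun S hS => ?_⟩
    rw [sum_sum_bR_xor_eq_sum_dHam, ← hx]
    exact_mod_cast sum_dHam_le_Dk p x hS
  · rintro v ⟨x, z, hz₁, hz₂, hv⟩
    obtain ⟨S, hS, hSx⟩ := exists_sum_dHam_eq_Dk p hkn x
    calc ((zk p k : ℕ) : ℝ) ≤ Dk p k x := by exact_mod_cast zk_le_Dk p k x
      _ = ∑ j, ∑ i ∈ S, bR (xor (p i j) (x j)) := by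
        rw [sum_sum_bR_xor_eq_sum_dHam, ← hSx, Nat.cast_sum]
      _ ≤ ∑ j, ∑ i ∈ S, z i j :=
        sum_le_sum fun j _ => sum_le_sum fun i _ => (bR_xor_le_iff _ _ _).mpr ⟨hz₁ i j, hz₂ i j⟩
      _ ≤ v := hv S hS

/-- The subset-based MIP with disaggregated `z`-variables
(minimize `v` s.t. `z i j ≥ p i j (1 − x j)`, `z i j ≥ (1 − p i j) x j`,
`Σ_j Σ_{i∈S} z i j ≤ v` for all `S` with `|S| = k`) has optimal value `z(k)`,
attained. -/
theorem mip_subset_disaggregated_value {n m k : ℕ} (hk1 : 1 ≤ k) (hkn : k ≤ n)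
    (p : Fin n → Fin m → Bool) :
    IsLeast {v : ℝ | ∃ (x : Fin m → Bool) (z : Fin n → Fin m → ℝ),
        (∀ (i : Fin n) (j : Fin m), bR (p i j) * (1 - bR (x j)) ≤ z i j) ∧
        (∀ (i : Fin n) (j : Fin m), (1 - bR (p i j)) * bR (x j) ≤ z i j) ∧
        (∀ S : Finset (Fin n), S.card = k → ∑ j : Fin m, ∑ i ∈ S, z i j ≤ v)}
      ((zk p k : ℕ) : ℝ) :=
  mip_subset_disaggregated_value_general hkn p
end

section
/- Fix 1 ≤ k ≤ n. The mixed-integer program: minimize Σ_{i ∈ Fin n} u i + Σ_{h ∈ Fin k} v h over x : Fin m → Bool, u : Fin n → ℝ, v : Fin k → ℝ, d : Fin n → ℝ, z : Fin n → Fin m → ℝ subject to u i + v h ≥ d i for all i ∈ Fin n and h ∈ Fin k, d i ≥ Σ_{j} z i j for all i, z i j ≥ (x j)·(1 − p i j) + (p i j)·(1 − x j) for all i, j (booleans identified with 0/1 reals), u i ≥ 0 for all i, and v h ≥ 0 for all h, has optimal value equal to z(k): its infimum over feasible points equals z(k) and is attained. -/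
open Finset

section KSum

variable {ι : Type*} [Fintype ι]

def kSum (f : ι → ℕ) (k : ℕ) : ℕ :=
  (powersetCard k (univ : Finset ι)).sup fun S => ∑ i ∈ S, f i

theorem sum_le_kSum (f : ι → ℕ) {S : Finset ι} {k : ℕ} (hS : #S = k) :
    ∑ i ∈ S, f i ≤ kSum f k :=
  le_sup (f := fun S => ∑ i ∈ S, f i) (mem_powersetCard.mpr ⟨subset_univ S, hS⟩)

theorem exists_sum_eq_kSum (f : ι → ℕ) {k : ℕ} (hk : k ≤ Fintype.card ι) :
    ∃ S : Finset ι, #S = k ∧ ∑ i ∈ S, f i = kSum f k := by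
  have hne : (powersetCard k (univ : Finset ι)).Nonempty :=
    powersetCard_nonempty.mpr (by rwa [card_univ])
  obtain ⟨S, hS, hsum⟩ := exists_mem_eq_sup _ hne fun S => ∑ i ∈ S, f i
  exact ⟨S, (mem_powersetCard.mp hS).2, hsum.symm⟩

theorem le_of_sum_eq_kSum [DecidableEq ι] (f : ι → ℕ) {S : Finset ι} {k : ℕ} (hS : #S = k)
    (hsum : ∑ i ∈ S, f i = kSum f k) {i j : ι} (hi : i ∈ S) (hj : j ∉ S) : f j ≤ f i := by
  have hj' : j ∉ S.erase i := fun h => hj (mem_of_mem_erase h)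
  have hswap := sum_le_kSum f (S := insert j (S.erase i)) (k := k) (by
    rw [card_insert_of_notMem hj', card_erase_of_mem hi]
    have := card_pos.mpr ⟨i, hi⟩
    omega)
  rw [sum_insert hj', ← hsum, ← add_sum_erase S f hi] at hswap
  omega

/-- `t` is the largest value outside a heaviest `k`-set; the truncated `f i - t` is the positive
part `(f i - t)⁺`. -/
theorem exists_add_mul_eq_kSum (f : ι → ℕ) {k : ℕ} (hk : k ≤ Fintype.card ι) :
    ∃ t : ℕ, ∑ i, (f i - t) + k * t = kSum f k := by
  classical
  obtain ⟨S, hS, hsum⟩ := exists_sum_eq_kSum f hk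
  refine ⟨Sᶜ.sup f, ?_⟩
  have hout : ∑ i ∈ Sᶜ, (f i - Sᶜ.sup f) = 0 :=
    sum_eq_zero fun j hj => tsub_eq_zero_of_le (le_sup hj)
  have hin : ∀ i ∈ S, Sᶜ.sup f ≤ f i := fun i hi =>
    Finset.sup_le fun j hj => le_of_sum_eq_kSum f hS hsum hi (mem_compl.mp hj)
  rw [← hsum, ← sum_add_sum_compl S, hout, add_zero, ← hS, ← smul_eq_mul, ← sum_const,
    ← sum_add_distrib]
  exact sum_congr rfl fun i hi => tsub_add_cancel_of_le (hin i hi)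

theorem sum_le_sum_add_sum_of_le_add {a u : ι → ℝ} {k : ℕ} {v : Fin k → ℝ}
    (hu : ∀ i, 0 ≤ u i) (hle : ∀ i h, a i ≤ u i + v h) {S : Finset ι} (hS : #S = k) :
    ∑ i ∈ S, a i ≤ ∑ i, u i + ∑ h, v h := by
  let e : S ≃ Fin k := S.equivFinOfCardEq hS
  calc ∑ i ∈ S, a i
      = ∑ i : S, a i := (sum_coe_sort S a).symm
    _ ≤ ∑ i : S, (u i + v (e i)) := sum_le_sum fun i _ => hle i (e i)
    _ = ∑ i ∈ S, u i + ∑ h, v h := by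
      rw [sum_add_distrib, sum_coe_sort S u, Equiv.sum_comp e v]
    _ ≤ ∑ i, u i + ∑ h, v h :=
      add_le_add_left (sum_le_sum_of_subset_of_nonneg (subset_univ S) fun i _ _ => hu i) _

theorem kSum_le_sum_add_sum_of_le_add {f : ι → ℕ} {u : ι → ℝ} {k : ℕ} {v : Fin k → ℝ}
    (hk : k ≤ Fintype.card ι) (hu : ∀ i, 0 ≤ u i) (hle : ∀ i h, (f i : ℝ) ≤ u i + v h) :
    (kSum f k : ℝ) ≤ ∑ i, u i + ∑ h, v h := by
  obtain ⟨S, hS, hsum⟩ := exists_sum_eq_kSum f hk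
  rw [← hsum, Nat.cast_sum]
  exact sum_le_sum_add_sum_of_le_add hu hle hS

end KSum

theorem sum_mismatch_eq_dHam {n m : ℕ} (p : Fin n → Fin m → Bool) (x : Fin m → Bool)
    (i : Fin n) :
    ∑ j, (bR (x j) * (1 - bR (p i j)) + bR (p i j) * (1 - bR (x j))) = (dHam p x i : ℝ) := by
  rw [dHam, card_filter, Nat.cast_sum]
  refine sum_congr rfl fun j _ => ?_
  cases p i j <;> cases x j <;> simp [bR]

theorem Dk_eq_kSum {n m : ℕ} (p : Fin n → Fin m → Bool) (k : ℕ) (x : Fin m → Bool) :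
    Dk p k x = kSum (dHam p x) k :=
  rfl

theorem mip_assignment_dual_value_general {n m k : ℕ} (hkn : k ≤ n)
    (p : Fin n → Fin m → Bool) :
    IsLeast {c : ℝ | ∃ (x : Fin m → Bool) (u : Fin n → ℝ) (v : Fin k → ℝ)
        (d : Fin n → ℝ) (z : Fin n → Fin m → ℝ),
        (∀ (i : Fin n) (h : Fin k), d i ≤ u i + v h) ∧
        (∀ i : Fin n, ∑ j : Fin m, z i j ≤ d i) ∧
        (∀ (i : Fin n) (j : Fin m),
          bR (x j) * (1 - bR (p i j)) + bR (p i j) * (1 - bR (x j)) ≤ z i j) ∧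
        (∀ i : Fin n, 0 ≤ u i) ∧ (∀ h : Fin k, 0 ≤ v h) ∧
        c = ∑ i : Fin n, u i + ∑ h : Fin k, v h}
      ((zk p k : ℕ) : ℝ) := by
  have hk : k ≤ Fintype.card (Fin n) := by simpa using hkn
  constructor
  · obtain ⟨x, -, hx⟩ := exists_mem_eq_inf' univ_nonempty (Dk p k)
    obtain ⟨t, ht⟩ := exists_add_mul_eq_kSum (dHam p x) hk
    refine ⟨x, fun i => ((dHam p x i - t : ℕ) : ℝ), fun _ => (t : ℝ), fun i => dHam p x i,
      fun i j => bR (x j) * (1 - bR (p i j)) + bR (p i j) * (1 - bR (x j)),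
      fun i _ => by dsimp only; exact_mod_cast le_tsub_add,
      fun i => (sum_mismatch_eq_dHam p x i).le, fun _ _ => le_rfl,
      fun _ => Nat.cast_nonneg _, fun _ => Nat.cast_nonneg _, ?_⟩
    rw [zk, hx, Dk_eq_kSum, ← ht]
    simp
  · rintro c ⟨x, u, v, d, z, hd, hz, hmis, hu, -, rfl⟩
    have hdist : ∀ i h, (dHam p x i : ℝ) ≤ u i + v h := fun i h =>
      calc (dHam p x i : ℝ) = _ := (sum_mismatch_eq_dHam p x i).symm
        _ ≤ ∑ j, z i j := sum_le_sum fun j _ => hmis i j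
        _ ≤ d i := hz i
        _ ≤ u i + v h := hd i h
    calc ((zk p k : ℕ) : ℝ) ≤ Dk p k x := mod_cast inf'_le _ (mem_univ x)
      _ ≤ _ := kSum_le_sum_add_sum_of_le_add hk hu hdist

/-- The assignment-dual MIP (minimize `Σ_i u_i + Σ_{h∈Fin k} v_h`
s.t. `u_i + v_h ≥ d_i`, `d_i ≥ Σ_j z_{ij}`,
`z_{ij} ≥ x_j(1 − p_{ij}) + p_{ij}(1 − x_j)`, `u ≥ 0`, `v ≥ 0`) has optimal
value `z(k)`, attained. -/
theorem mip_assignment_dual_value {n m k : ℕ} (hk1 : 1 ≤ k) (hkn : k ≤ n)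
    (p : Fin n → Fin m → Bool) :
    IsLeast {c : ℝ | ∃ (x : Fin m → Bool) (u : Fin n → ℝ) (v : Fin k → ℝ)
        (d : Fin n → ℝ) (z : Fin n → Fin m → ℝ),
        (∀ (i : Fin n) (h : Fin k), d i ≤ u i + v h) ∧
        (∀ i : Fin n, ∑ j : Fin m, z i j ≤ d i) ∧
        (∀ (i : Fin n) (j : Fin m),
          bR (x j) * (1 - bR (p i j)) + bR (p i j) * (1 - bR (x j)) ≤ z i j) ∧
        (∀ i : Fin n, 0 ≤ u i) ∧ (∀ h : Fin k, 0 ≤ v h) ∧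
        c = ∑ i : Fin n, u i + ∑ h : Fin k, v h}
      ((zk p k : ℕ) : ℝ) :=
  mip_assignment_dual_value_general hkn p
end

section
/- Fix 1 ≤ k ≤ n. Suppose x : Fin m → ℝ, v ∈ ℝ, and z : Fin n → Fin m → ℝ satisfy z i j ≥ (p i j)·(1 − x j) and z i j ≥ (1 − p i j)·(x j) for all i, j (booleans identified with 0/1 reals), and Σ_{j} Σ_{i ∈ S} z i j ≤ v for every finset S ⊆ Fin n with S.card = k. Then for every finset S ⊆ Fin n with S.card = k, Σ_{j} (k − γ_j(S))·(x j) + Σ_{j} γ_j(S)·(1 − x j) ≤ v. (In particular, the projection onto (x, v) of the feasible region of the continuous relaxation of the subset-based formulation with z-variables is contained in the feasible region of the continuous relaxation of the aggregated subset-based formulation, so the latter is at least as strong.) -/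
/-! The constraints on `z` say that `z i j ≥ 1 - x j` when voter `i` approves `j` and
`z i j ≥ x j` otherwise. Summing over `i ∈ S` counts `γ_j(S)` approvals and `k - γ_j(S)`
disapprovals, so the aggregated left-hand side is at most `∑ j, ∑ i ∈ S, z i j ≤ v`. -/

/-- Number of approvals of candidate `j` among the voters in `S`. -/
def gammaS {n m : ℕ} (p : Fin n → Fin m → Bool) (S : Finset (Fin n)) (j : Fin m) : ℕ :=
  (S.filter fun i => p i j = true).card

open Finset

lemma ite_le_of_bR_mul_le {b : Bool} {t w : ℝ} (h1 : bR b * (1 - t) ≤ w)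
    (h2 : (1 - bR b) * t ≤ w) : (if b then 1 - t else t) ≤ w := by
  cases b <;> simp_all [bR]

lemma sum_ite_const_eq_card_filter {ι : Type*} (s : Finset ι) (q : ι → Prop) [DecidablePred q]
    (a b : ℝ) :
    ∑ i ∈ s, (if q i then a else b) = (#s - #(s.filter q)) * b + #(s.filter q) * a := by
  have hcard := card_filter_add_card_filter_not (s := s) q
  rw [sum_ite, sum_const, sum_const, nsmul_eq_mul, nsmul_eq_mul, ← hcard]
  push_cast
  ring

theorem projection_feasibility_general {n m k : ℕ}
    (p : Fin n → Fin m → Bool) (x : Fin m → ℝ) (v : ℝ) (z : Fin n → Fin m → ℝ)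
    (h1 : ∀ (i : Fin n) (j : Fin m), bR (p i j) * (1 - x j) ≤ z i j)
    (h2 : ∀ (i : Fin n) (j : Fin m), (1 - bR (p i j)) * x j ≤ z i j)
    (h3 : ∀ S : Finset (Fin n), S.card = k → ∑ j : Fin m, ∑ i ∈ S, z i j ≤ v) :
    ∀ S : Finset (Fin n), S.card = k →
      ∑ j : Fin m, ((k : ℝ) - (gammaS p S j : ℝ)) * x j +
        ∑ j : Fin m, (gammaS p S j : ℝ) * (1 - x j) ≤ v := by
  intro S hS
  calc ∑ j : Fin m, ((k : ℝ) - (gammaS p S j : ℝ)) * x j +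
        ∑ j : Fin m, (gammaS p S j : ℝ) * (1 - x j)
      = ∑ j : Fin m, ∑ i ∈ S, (if p i j then 1 - x j else x j) := by
        simp only [sum_ite_const_eq_card_filter, ← sum_add_distrib, gammaS, hS]
    _ ≤ ∑ j : Fin m, ∑ i ∈ S, z i j :=
        sum_le_sum fun j _ => sum_le_sum fun i _ => ite_le_of_bR_mul_le (h1 i j) (h2 i j)
    _ ≤ v := h3 S hS

/-- Any point `(x, z, v)` feasible for the continuous relaxation of
the disaggregated subset-based formulation projects onto a point `(x, v)` feasible
for the continuous relaxation of the aggregated formulation: for every finset `S`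
with `|S| = k`, `Σ_j (k − γ_j(S)) x_j + Σ_j γ_j(S)(1 − x_j) ≤ v`. -/
theorem projection_feasibility {n m k : ℕ} (hk1 : 1 ≤ k) (hkn : k ≤ n)
    (p : Fin n → Fin m → Bool) (x : Fin m → ℝ) (v : ℝ) (z : Fin n → Fin m → ℝ)
    (h1 : ∀ (i : Fin n) (j : Fin m), bR (p i j) * (1 - x j) ≤ z i j)
    (h2 : ∀ (i : Fin n) (j : Fin m), (1 - bR (p i j)) * x j ≤ z i j)
    (h3 : ∀ S : Finset (Fin n), S.card = k → ∑ j : Fin m, ∑ i ∈ S, z i j ≤ v) :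
    ∀ S : Finset (Fin n), S.card = k →
      ∑ j : Fin m, ((k : ℝ) - (gammaS p S j : ℝ)) * x j +
        ∑ j : Fin m, (gammaS p S j : ℝ) * (1 - x j) ≤ v :=
  projection_feasibility_general p x v z h1 h2 h3
end

section
/- For every 1 ≤ k < n, the optimal values of the k-sum and (k+1)-sum approval voting problems satisfy (k+1)·z(k) ≥ k·z(k+1); equivalently, z(k) ≥ (k/(k+1))·z(k+1). -/
open Finset

section TopSum

variable {ι : Type*}

theorem Finset.sum_sum_erase_add_sum [DecidableEq ι] {M : Type*} [AddCommMonoid M]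
    (s : Finset ι) (f : ι → M) :
    ∑ j ∈ s, ∑ i ∈ s.erase j, f i + ∑ i ∈ s, f i = #s • ∑ i ∈ s, f i := by
  rw [← sum_add_distrib, sum_congr rfl fun j hj => sum_erase_add s f hj, sum_const]

/-- The sum of the `k` largest values of `f` on `s`; zero when `#s < k`. -/
def topSum (s : Finset ι) (k : ℕ) (f : ι → ℕ) : ℕ :=
  (s.powersetCard k).sup fun t => ∑ i ∈ t, f i

variable {s t : Finset ι} {k : ℕ} {f : ι → ℕ}

theorem sum_le_topSum (ht : t ⊆ s) (hcard : #t = k) : ∑ i ∈ t, f i ≤ topSum s k f :=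
  le_sup (f := fun t => ∑ i ∈ t, f i) (mem_powersetCard.2 ⟨ht, hcard⟩)

/-- Each of the `k + 1` leave-one-out subsums of `t` is at most `topSum s k f`, and together
they count every element of `t` exactly `k` times. -/
theorem mul_sum_le_succ_mul_topSum [DecidableEq ι] (ht : t ⊆ s) (hcard : #t = k + 1) :
    k * ∑ i ∈ t, f i ≤ (k + 1) * topSum s k f := by
  have hleave : ∑ j ∈ t, ∑ i ∈ t.erase j, f i = k * ∑ i ∈ t, f i := by
    have := t.sum_sum_erase_add_sum f
    rw [hcard, smul_eq_mul, add_one_mul] at this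
    omega
  calc k * ∑ i ∈ t, f i = ∑ j ∈ t, ∑ i ∈ t.erase j, f i := hleave.symm
    _ ≤ ∑ _j ∈ t, topSum s k f := sum_le_sum fun j hj =>
        sum_le_topSum ((erase_subset j t).trans ht) (by rw [card_erase_of_mem hj, hcard]; rfl)
    _ = (k + 1) * topSum s k f := by rw [sum_const, hcard, smul_eq_mul]

theorem mul_topSum_succ_le [DecidableEq ι] (s : Finset ι) (k : ℕ) (f : ι → ℕ) :
    k * topSum s (k + 1) f ≤ (k + 1) * topSum s k f := by
  rw [topSum, apply_sup_eq_sup_comp_of_linearOrder (k * ·) (fun _ _ h => Nat.mul_le_mul_left k h)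
    (mul_zero k)]
  exact Finset.sup_le fun t ht =>
    mul_sum_le_succ_mul_topSum (mem_powersetCard.1 ht).1 (mem_powersetCard.1 ht).2

end TopSum

theorem zk_lower_bound_general {n m k : ℕ}
    (p : Fin n → Fin m → Bool) :
    k * zk p (k + 1) ≤ (k + 1) * zk p k := by
  obtain ⟨x, -, hx⟩ := exists_mem_eq_inf' univ_nonempty (Dk p k)
  calc k * zk p (k + 1) ≤ k * Dk p (k + 1) x :=
        Nat.mul_le_mul_left k (inf'_le _ (mem_univ x))
    _ ≤ (k + 1) * Dk p k x := mul_topSum_succ_le univ k (dHam p x)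
    _ = (k + 1) * zk p k := by rw [zk, hx]

/-- For every `1 ≤ k < n`, `(k+1)·z(k) ≥ k·z(k+1)`, i.e.
`z(k) ≥ (k/(k+1))·z(k+1)`. -/
theorem zk_lower_bound {n m k : ℕ} (hk1 : 1 ≤ k) (hkn : k < n)
    (p : Fin n → Fin m → Bool) :
    k * zk p (k + 1) ≤ (k + 1) * zk p k :=
  zk_lower_bound_general p
end

section
/- Fix 1 ≤ k ≤ n and a candidate j0 ∈ Fin m with γ_{j0} ≥ n − ⌊k/2⌋. Then for every committee x : Fin m → Bool, D_k(Function.update x j0 true) ≤ D_k(x). In particular, there exists an optimal solution of the k-sum approval voting problem in which candidate j0 is elected. -/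
open Finset

section

variable {n m : ℕ} (p : Fin n → Fin m → Bool)

theorem dHam_update_add (x : Fin m → Bool) (j : Fin m) (c : Bool) (i : Fin n) :
    dHam p (Function.update x j c) i + (if p i j ≠ x j then 1 else 0) =
      dHam p x i + (if p i j ≠ c then 1 else 0) := by
  unfold dHam
  rw [card_filter, card_filter, ← add_sum_erase _ _ (mem_univ j),
    ← add_sum_erase _ _ (mem_univ j)]
  have h_rest : ∀ j' ∈ univ.erase j,
      (if p i j' ≠ Function.update x j c j' then 1 else 0) = (if p i j' ≠ x j' then 1 else 0) :=
    fun j' hj' => by rw [Function.update_of_ne (ne_of_mem_erase hj')]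
  rw [sum_congr rfl h_rest, Function.update_self]
  ring

theorem sum_dHam_update_true_add {x : Fin m → Bool} {j : Fin m} (hx : x j = false)
    (S : Finset (Fin n)) :
    ∑ i ∈ S, dHam p (Function.update x j true) i + #{i ∈ S | p i j = true} =
      ∑ i ∈ S, dHam p x i + #{i ∈ S | p i j = false} := by
  rw [card_filter, card_filter, ← sum_add_distrib, ← sum_add_distrib]
  refine sum_congr rfl fun i _ => ?_
  simpa [hx] using dHam_update_add p x j true i

theorem gamma_add_card_filter_false (j : Fin m) :
    gamma p j + #{i | p i j = false} = n := by
  simpa [gamma] using card_filter_add_card_filter_not (s := (univ : Finset (Fin n)))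
    fun i => p i j = true

theorem sum_dHam_update_true_le {k : ℕ} {j : Fin m} (hj : n - k / 2 ≤ gamma p j)
    {x : Fin m → Bool} (hx : x j = false) {S : Finset (Fin n)} (hS : #S = k) :
    ∑ i ∈ S, dHam p (Function.update x j true) i ≤ ∑ i ∈ S, dHam p x i := by
  have h_sum := sum_dHam_update_true_add p hx S
  have h_split : #{i ∈ S | p i j = true} + #{i ∈ S | p i j = false} = k := by
    simpa [hS] using card_filter_add_card_filter_not (s := S) fun i => p i j = true
  have h_sub : #{i ∈ S | p i j = false} ≤ #{i | p i j = false} :=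
    card_le_card (filter_subset_filter _ (subset_univ S))
  have h_total := gamma_add_card_filter_false p j
  omega

theorem Dk_update_true_le {k : ℕ} {j : Fin m} (hj : n - k / 2 ≤ gamma p j)
    (x : Fin m → Bool) : Dk p k (Function.update x j true) ≤ Dk p k x := by
  cases hx : x j
  · exact sup_mono_fun fun S hS =>
      sum_dHam_update_true_le p hj hx (mem_powersetCard_univ.mp hS)
  · rw [← hx, Function.update_eq_self]

end

theorem fix_variable_to_one_general {n m k : ℕ}
    (p : Fin n → Fin m → Bool) (j0 : Fin m) (hj0 : n - k / 2 ≤ gamma p j0) :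
    (∀ x : Fin m → Bool, Dk p k (Function.update x j0 true) ≤ Dk p k x) ∧
    (∃ xstar : Fin m → Bool, xstar j0 = true ∧
      ∀ x : Fin m → Bool, Dk p k xstar ≤ Dk p k x) := by
  obtain ⟨y, -, hy⟩ := exists_min_image univ (Dk p k) univ_nonempty
  exact ⟨Dk_update_true_le p hj0, Function.update y j0 true, Function.update_self _ _ _,
    fun x => (Dk_update_true_le p hj0 y).trans (hy x (mem_univ x))⟩

/-- If `γ_{j0} ≥ n − ⌊k/2⌋`, then electing `j0` never increases the
`k`-sum score, and hence some optimal `k`-sum committee elects `j0`. -/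
theorem fix_variable_to_one {n m k : ℕ} (hk1 : 1 ≤ k) (hkn : k ≤ n)
    (p : Fin n → Fin m → Bool) (j0 : Fin m) (hj0 : n - k / 2 ≤ gamma p j0) :
    (∀ x : Fin m → Bool, Dk p k (Function.update x j0 true) ≤ Dk p k x) ∧
    (∃ xstar : Fin m → Bool, xstar j0 = true ∧
      ∀ x : Fin m → Bool, Dk p k xstar ≤ Dk p k x) :=
  fix_variable_to_one_general p j0 hj0
end

section
/- Fix 1 ≤ k ≤ n and a candidate j0 ∈ Fin m with γ_{j0} ≤ ⌊k/2⌋. Then for every committee x : Fin m → Bool, D_k(Function.update x j0 false) ≤ D_k(x). In particular, there exists an optimal solution of the k-sum approval voting problem in which candidate j0 is not elected. -/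
/-! Deselecting `j0` moves every approver of `j0` one step further from the committee and every
other voter one step closer. Any `k` voters contain at most `γ_{j0} ≤ k / 2` approvers, so the
distance sum of every `k`-set, hence their maximum `D_k`, does not increase. -/

open Finset

section

variable {n m : ℕ} (p : Fin n → Fin m → Bool)

lemma dHam_add_eq_of_forall_ne_eq {x y : Fin m → Bool} {j0 : Fin m}
    (hxy : ∀ j ≠ j0, x j = y j) (i : Fin n) :
    dHam p x i + (if p i j0 ≠ y j0 then 1 else 0) =
      dHam p y i + (if p i j0 ≠ x j0 then 1 else 0) := by
  have hsum (z : Fin m → Bool) : dHam p z i = ∑ j, if p i j ≠ z j then 1 else 0 := by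
    simp [dHam, card_filter]
  have hrest : ∑ j ∈ {j0}ᶜ, (if p i j ≠ x j then 1 else 0) =
      ∑ j ∈ {j0}ᶜ, (if p i j ≠ y j then 1 else 0) :=
    sum_congr rfl fun j hj => by rw [hxy j (by simpa using hj)]
  rw [hsum, hsum, Fintype.sum_eq_add_sum_compl j0, Fintype.sum_eq_add_sum_compl j0 (M := ℕ),
    hrest]
  ring

lemma sum_dHam_update_false_add {x : Fin m → Bool} {j0 : Fin m} (hx : x j0 = true)
    (S : Finset (Fin n)) :
    ∑ i ∈ S, dHam p (Function.update x j0 false) i + #{i ∈ S | p i j0 = false} =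
      ∑ i ∈ S, dHam p x i + #{i ∈ S | p i j0 = true} := by
  have hpoint (i : Fin n) :=
    dHam_add_eq_of_forall_ne_eq p (x := Function.update x j0 false) (y := x)
      (fun j hj => Function.update_of_ne hj false x) i
  simp only [Function.update_self, hx, ne_eq, Bool.not_eq_true, Bool.not_eq_false] at hpoint
  simp only [card_filter, ← sum_add_distrib, hpoint]

lemma sum_dHam_update_false_le {j0 : Fin m} (x : Fin m → Bool) {S : Finset (Fin n)}
    (hS : 2 * #{i ∈ S | p i j0 = true} ≤ #S) :
    ∑ i ∈ S, dHam p (Function.update x j0 false) i ≤ ∑ i ∈ S, dHam p x i := by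
  cases hx : x j0 with
  | false => rw [Function.update_eq_self_iff.mpr hx.symm]
  | true =>
    have hsplit := card_filter_add_card_filter_not (s := S) (fun i => p i j0 = true)
    simp only [Bool.not_eq_true] at hsplit
    have := sum_dHam_update_false_add p hx S
    omega

lemma card_filter_approve_le_gamma (j0 : Fin m) (S : Finset (Fin n)) :
    #{i ∈ S | p i j0 = true} ≤ gamma p j0 :=
  card_le_card (filter_subset_filter _ (subset_univ S))

theorem Dk_update_false_le {k : ℕ} {j0 : Fin m} (hj0 : gamma p j0 ≤ k / 2)
    (x : Fin m → Bool) :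
    Dk p k (Function.update x j0 false) ≤ Dk p k x := by
  refine sup_mono_fun fun S hS => sum_dHam_update_false_le p x ?_
  rw [(mem_powersetCard.mp hS).2]
  have := card_filter_approve_le_gamma p j0 S
  omega

end

theorem fix_variable_to_zero_general {n m k : ℕ}
    (p : Fin n → Fin m → Bool) (j0 : Fin m) (hj0 : gamma p j0 ≤ k / 2) :
    (∀ x : Fin m → Bool, Dk p k (Function.update x j0 false) ≤ Dk p k x) ∧
    (∃ xstar : Fin m → Bool, xstar j0 = false ∧
      ∀ x : Fin m → Bool, Dk p k xstar ≤ Dk p k x) := by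
  obtain ⟨x, -, hx⟩ := exists_min_image univ (Dk p k) univ_nonempty
  exact ⟨Dk_update_false_le p hj0, Function.update x j0 false, Function.update_self _ _ _,
    fun y => (Dk_update_false_le p hj0 x).trans (hx y (mem_univ y))⟩

/-- If `γ_{j0} ≤ ⌊k/2⌋`, then removing `j0` from the committee
never increases the `k`-sum score, and hence some optimal `k`-sum committee
does not elect `j0`. -/
theorem fix_variable_to_zero {n m k : ℕ} (hk1 : 1 ≤ k) (hkn : k ≤ n)
    (p : Fin n → Fin m → Bool) (j0 : Fin m) (hj0 : gamma p j0 ≤ k / 2) :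
    (∀ x : Fin m → Bool, Dk p k (Function.update x j0 false) ≤ Dk p k x) ∧
    (∃ xstar : Fin m → Bool, xstar j0 = false ∧
      ∀ x : Fin m → Bool, Dk p k xstar ≤ Dk p k x) :=
  fix_variable_to_zero_general p j0 hj0
end
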